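/- arXiv:math/0102049 — 2 statements merged into one kernel-verified Lean document; each statement's English description precedes it below -/
import Mathlib

section
/- Define on ℤ² the function N(p, q) = 2(|p + 14q| + 3|p| + |5p − 8q|). For every pair (p, q) of coprime integers with q ≥ 1 (i.e. every non-meridional slope p/q), N(p, q) > 36. -/
/-- The Culler–Shalen norm on the norm curve of the (−3,3,4) pretzel knot. -/
def csNorm (p q : ℤ) : ℤ := 2 * (|p + 14 * q| + 3 * |p| + |5 * p - 8 * q|)

theorem stmt_3 (p q : ℤ) (hcop : IsCoprime p q) (hq : 1 ≤ q) :
    36 < csNorm p q := by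
  unfold csNorm
  rcases abs_cases (p + 14 * q) with ⟨h1, _⟩ | ⟨h1, _⟩ <;>
  rcases abs_cases p with ⟨h2, _⟩ | ⟨h2, _⟩ <;>
  rcases abs_cases (5 * p - 8 * q) with ⟨h3, _⟩ | ⟨h3, _⟩ <;>
  omega
end

section
/- Define on ℝ² the norm N(x, y) = 2(|x + 14y| + 3|x| + |5x − 8y|). The unit ball of radius 18 for N, i.e. {(x,y) : N(x,y) ≤ 18}, is contained in the strip {(x,y) : |y| ≤ 1/2}. -/
/-- The Culler–Shalen norm extended to ℝ². -/
noncomputable def csNormR (x y : ℝ) : ℝ := 2 * (|x + 14 * y| + 3 * |x| + |5 * x - 8 * y|)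

theorem stmt_5 (x y : ℝ) (h : csNormR x y ≤ 18) : |y| ≤ 1 / 2 := by
  unfold csNormR at h
  rcases abs_cases (x + 14 * y) with ⟨h1, _⟩ | ⟨h1, _⟩ <;>
  rcases abs_cases x with ⟨h2, _⟩ | ⟨h2, _⟩ <;>
  rcases abs_cases (5 * x - 8 * y) with ⟨h3, _⟩ | ⟨h3, _⟩ <;>
  rcases abs_cases y with ⟨h4, _⟩ | ⟨h4, _⟩ <;>
  linarith
end
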